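/- arXiv:0811.4641 — 8 statements merged into one kernel-verified Lean document; each statement's English description precedes it below -/
import Mathlib

section
/- The polynomial identity (1-z)·(1+(2-8i)z+z^2)^2 = (1+(2i-1)z)^4 - z·(2+i-iz)^4 holds in the polynomial ring C[z]. -/
open Complex

theorem one_sub_mul_sq_eq_pow_four_sub_mul_pow_four {R : Type*} [CommRing R] {i : R}
    (hi : i ^ 2 = -1) (z : R) :
    (1 - z) * (1 + (2 - 8 * i) * z + z ^ 2) ^ 2 =
      (1 + (2 * i - 1) * z) ^ 4 - z * (2 + i - i * z) ^ 4 := by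
  -- The coefficient is the quotient of the difference of the two sides by `i ^ 2 + 1` in `ℤ[i, z]`.
  linear_combination (i ^ 2 * (z - 4 * z ^ 2 + 6 * z ^ 3 - 20 * z ^ 4 + z ^ 5) +
    i * (8 * z - 24 * z ^ 2 - 8 * z ^ 3 + 24 * z ^ 4) +
    (23 * z - 4 * z ^ 2 + 2 * z ^ 3 - 4 * z ^ 4 - z ^ 5)) * hi

theorem triple_two_add_i_identity (z : ℂ) :
    (1 - z) * (1 + (2 - 8 * I) * z + z ^ 2) ^ 2 =
      (1 + (2 * I - 1) * z) ^ 4 - z * (2 + I - I * z) ^ 4 :=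
  one_sub_mul_sq_eq_pow_four_sub_mul_pow_four I_sq z
end

section
/- If polynomials P, Q, R in C[z] satisfy (1-z)R(z)^2 = Q(z)^4 - z·P(z)^4, and (x,y) is a point on the curve y^2 = x^3 - x with x ≠ 0 and P(x^{-2}) ≠ 0, then the point (X, Y) = (x·Q(x^{-2})^2 / P(x^{-2})^2, y·Q(x^{-2})·R(x^{-2}) / P(x^{-2})^3) also lies on the curve, i.e. Y^2 = X^3 - X. -/
/-! Substituting `z = x⁻²` into `(1 - z) R² = Q⁴ - z P⁴` and clearing denominators gives
`(x² - 1) r² = x² q⁴ - p⁴` for `p, q, r` the values of `P, Q, R` at `x⁻²`. Multiplied by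
`x q² / p⁶`, and with `y² = x³ - x`, this is exactly `Y² = X³ - X`. -/

lemma sq_sub_one_mul_sq_eq_of_mul_eq_one {R : Type*} [CommRing R] {x z p q r : R}
    (hxz : x ^ 2 * z = 1) (hpqr : (1 - z) * r ^ 2 = q ^ 4 - z * p ^ 4) :
    (x ^ 2 - 1) * r ^ 2 = x ^ 2 * q ^ 4 - p ^ 4 := by
  linear_combination x ^ 2 * hpqr + (r ^ 2 - p ^ 4) * hxz

lemma sq_eq_cube_sub_of_sq_sub_one_mul_sq_eq {K : Type*} [Field K] {x y p q r : K} (hp : p ≠ 0)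
    (hpqr : (x ^ 2 - 1) * r ^ 2 = x ^ 2 * q ^ 4 - p ^ 4) (h : y ^ 2 = x ^ 3 - x) :
    (y * q * r / p ^ 3) ^ 2 = (x * q ^ 2 / p ^ 2) ^ 3 - x * q ^ 2 / p ^ 2 := by
  field_simp
  linear_combination x * q ^ 2 * hpqr + q ^ 2 * r ^ 2 * h

theorem pqr_gives_E1_endomorphism (P Q R : Polynomial ℂ)
    (hPQR : ∀ z : ℂ, (1 - z) * (R.eval z) ^ 2 = (Q.eval z) ^ 4 - z * (P.eval z) ^ 4)
    (x y : ℂ) (hx : x ≠ 0) (hP : P.eval (x ^ (-2 : ℤ)) ≠ 0)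
    (h : y ^ 2 = x ^ 3 - x) :
    (y * Q.eval (x ^ (-2 : ℤ)) * R.eval (x ^ (-2 : ℤ)) / (P.eval (x ^ (-2 : ℤ))) ^ 3) ^ 2 =
      (x * (Q.eval (x ^ (-2 : ℤ))) ^ 2 / (P.eval (x ^ (-2 : ℤ))) ^ 2) ^ 3 -
        x * (Q.eval (x ^ (-2 : ℤ))) ^ 2 / (P.eval (x ^ (-2 : ℤ))) ^ 2 := by
  rw [zpow_neg, zpow_ofNat] at hP ⊢
  exact sq_eq_cube_sub_of_sq_sub_one_mul_sq_eq hP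
    (sq_sub_one_mul_sq_eq_of_mul_eq_one (mul_inv_cancel₀ (pow_ne_zero 2 hx)) (hPQR _)) h
end

section
/- If polynomials P, Q, R in C[z] satisfy R(z)^2 = (1-z)^2 Q(z)^4 - z·P(z)^4, and (x,y) lies on y^2 = x^3 - x with x ≠ 0 and P(x^{-2}) ≠ 0, then X = (x^2-1)·Q(x^{-2})^2/(x·P(x^{-2})^2) and Y = y·Q(x^{-2})·R(x^{-2})/P(x^{-2})^3 satisfy Y^2 = X^3 - X. -/
/-!
Put `z = x⁻²`. Multiplying the relation `r² = (1 - z)² q⁴ - z p⁴` by `x⁴` turns it into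
`(x² r)² = (x² - 1)² q⁴ - x² p⁴`, and for `X = (x² - 1) q² / (x p²)` one has
`X³ - X = (x² - 1) q² ((x² - 1)² q⁴ - x² p⁴) / (x³ p⁶)`. Hence
`X³ - X = (x³ - x) q² r² / p⁶ = y² q² r² / p⁶ = Y²`.
-/

namespace PullbackE1

lemma sq_mul_sq_eq_of_mul_sq_eq_one {R : Type*} [CommRing R] {x z p q r : R}
    (hz : z * x ^ 2 = 1) (hr : r ^ 2 = (1 - z) ^ 2 * q ^ 4 - z * p ^ 4) :
    (r * x ^ 2) ^ 2 = (x ^ 2 - 1) ^ 2 * q ^ 4 - x ^ 2 * p ^ 4 := by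
  linear_combination x ^ 4 * hr + (q ^ 4 * (z * x ^ 2 - 2 * x ^ 2 + 1) - x ^ 2 * p ^ 4) * hz

lemma cube_sub_self_div {K : Type*} [Field K] {x p q : K} (hx : x ≠ 0) (hp : p ≠ 0) :
    ((x ^ 2 - 1) * q ^ 2 / (x * p ^ 2)) ^ 3 - (x ^ 2 - 1) * q ^ 2 / (x * p ^ 2) =
      (x ^ 2 - 1) * q ^ 2 * ((x ^ 2 - 1) ^ 2 * q ^ 4 - x ^ 2 * p ^ 4) / (x ^ 3 * p ^ 6) := by
  field_simp

lemma sq_eq_cube_sub_self_of_quartic {K : Type*} [Field K] {x y p q r : K}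
    (hx : x ≠ 0) (hp : p ≠ 0) (hy : y ^ 2 = x ^ 3 - x)
    (hr : (r * x ^ 2) ^ 2 = (x ^ 2 - 1) ^ 2 * q ^ 4 - x ^ 2 * p ^ 4) :
    (y * q * r / p ^ 3) ^ 2 =
      ((x ^ 2 - 1) * q ^ 2 / (x * p ^ 2)) ^ 3 - (x ^ 2 - 1) * q ^ 2 / (x * p ^ 2) := by
  rw [cube_sub_self_div hx hp, ← hr]
  field_simp
  linear_combination q ^ 2 * r ^ 2 * hy

end PullbackE1

theorem pqr_even_gives_E1_endomorphism (P Q R : Polynomial ℂ)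
    (hPQR : ∀ z : ℂ, (R.eval z) ^ 2 = (1 - z) ^ 2 * (Q.eval z) ^ 4 - z * (P.eval z) ^ 4)
    (x y : ℂ) (hx : x ≠ 0) (hP : P.eval (x ^ (-2 : ℤ)) ≠ 0)
    (h : y ^ 2 = x ^ 3 - x) :
    (y * Q.eval (x ^ (-2 : ℤ)) * R.eval (x ^ (-2 : ℤ)) / (P.eval (x ^ (-2 : ℤ))) ^ 3) ^ 2 =
      ((x ^ 2 - 1) * (Q.eval (x ^ (-2 : ℤ))) ^ 2 / (x * (P.eval (x ^ (-2 : ℤ))) ^ 2)) ^ 3 -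
        (x ^ 2 - 1) * (Q.eval (x ^ (-2 : ℤ))) ^ 2 / (x * (P.eval (x ^ (-2 : ℤ))) ^ 2) := by
  have hz : x ^ (-2 : ℤ) * x ^ 2 = 1 := by
    rw [zpow_neg, zpow_ofNat, inv_mul_cancel₀ (pow_ne_zero 2 hx)]
  exact PullbackE1.sq_eq_cube_sub_self_of_quartic hx hP h
    (PullbackE1.sq_mul_sq_eq_of_mul_sq_eq_one hz (hPQR _))
end

section
/- If polynomials P, Q, R in C[z] satisfy (1-z)R(z)^2 = Q(z)^3 - z·P(z)^6, and (x,y) is a point on y^2 = x^3 - 1 with x ≠ 0 and P(x^{-3}) ≠ 0, then X = x·Q(x^{-3})/P(x^{-3})^2 and Y = y·R(x^{-3})/P(x^{-3})^3 satisfy Y^2 = X^3 - 1. -/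
/-! Substituting `z = x⁻³` and multiplying the relation by `x³` gives
`(x³ - 1) R² = x³ Q³ - P⁶`; on the curve `x³ - 1 = y²`, and dividing by `P⁶` is exactly
the Weierstrass equation for `(X, Y)`. -/

theorem cube_sub_one_mul_sq_eq_of_mul_eq_one {K : Type*} [CommRing K] {x z p q r : K}
    (hxz : x ^ 3 * z = 1) (hpqr : (1 - z) * r ^ 2 = q ^ 3 - z * p ^ 6) :
    (x ^ 3 - 1) * r ^ 2 = x ^ 3 * q ^ 3 - p ^ 6 := by
  linear_combination x ^ 3 * hpqr + (r ^ 2 - p ^ 6) * hxz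

theorem weierstrass_of_pqr_relation {K : Type*} [Field K] {x y z p q r : K}
    (hxz : x ^ 3 * z = 1) (hp : p ≠ 0) (hpqr : (1 - z) * r ^ 2 = q ^ 3 - z * p ^ 6)
    (h : y ^ 2 = x ^ 3 - 1) :
    (y * r / p ^ 3) ^ 2 = (x * q / p ^ 2) ^ 3 - 1 := by
  field_simp
  linear_combination r ^ 2 * h + cube_sub_one_mul_sq_eq_of_mul_eq_one hxz hpqr

theorem pqr_gives_E2_endomorphism (P Q R : Polynomial ℂ)
    (hPQR : ∀ z : ℂ, (1 - z) * (R.eval z) ^ 2 = (Q.eval z) ^ 3 - z * (P.eval z) ^ 6)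
    (x y : ℂ) (hx : x ≠ 0) (hP : P.eval (x ^ (-3 : ℤ)) ≠ 0)
    (h : y ^ 2 = x ^ 3 - 1) :
    (y * R.eval (x ^ (-3 : ℤ)) / (P.eval (x ^ (-3 : ℤ))) ^ 3) ^ 2 =
      (x * Q.eval (x ^ (-3 : ℤ)) / (P.eval (x ^ (-3 : ℤ))) ^ 2) ^ 3 - 1 := by
  have hxz : x ^ 3 * x ^ (-3 : ℤ) = 1 := by
    rw [zpow_neg, zpow_ofNat, mul_inv_cancel₀ (pow_ne_zero 3 hx)]
  exact weierstrass_of_pqr_relation hxz hP (hPQR _) h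
end

section
/- If polynomials P, Q, R in C[z] satisfy z·P(z)^3 + (1-z)·R(z)^3 = Q(z)^3, and (X,Y) is a point on X^3 + Y^3 = 1 with X ≠ 0 and P(X^{-3}) ≠ 0, then the pair (U, V) = (X·Q(X^{-3})/P(X^{-3}), Y·R(X^{-3})/P(X^{-3})) also satisfies U^3 + V^3 = 1. -/
/-! With `z = X⁻³`, multiplying `z P³ + (1 - z) R³ = Q³` by `X³` and using `X³ - 1 = -Y³` gives
`(X Q)³ + (Y R)³ = P³`; dividing by `P³` puts `(U, V)` on the Fermat cubic. -/

theorem cube_add_cube_eq_of_pqr_identity {R : Type*} [CommRing R] {x y z p q r : R}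
    (hz : z * x ^ 3 = 1) (hpqr : z * p ^ 3 + (1 - z) * r ^ 3 = q ^ 3)
    (h : x ^ 3 + y ^ 3 = 1) :
    (x * q) ^ 3 + (y * r) ^ 3 = p ^ 3 := by
  linear_combination (-x ^ 3) * hpqr + r ^ 3 * h + (p ^ 3 - r ^ 3) * hz

theorem zpow_neg_three_mul_pow_three {K : Type*} [DivisionRing K] {x : K} (hx : x ≠ 0) :
    x ^ (-3 : ℤ) * x ^ 3 = 1 := by
  rw [zpow_neg, zpow_ofNat, inv_mul_cancel₀ (pow_ne_zero 3 hx)]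

theorem pqr_gives_E3_endomorphism (P Q R : Polynomial ℂ)
    (hPQR : ∀ z : ℂ, z * (P.eval z) ^ 3 + (1 - z) * (R.eval z) ^ 3 = (Q.eval z) ^ 3)
    (X Y : ℂ) (hX : X ≠ 0) (hP : P.eval (X ^ (-3 : ℤ)) ≠ 0)
    (h : X ^ 3 + Y ^ 3 = 1) :
    (X * Q.eval (X ^ (-3 : ℤ)) / P.eval (X ^ (-3 : ℤ))) ^ 3 +
      (Y * R.eval (X ^ (-3 : ℤ)) / P.eval (X ^ (-3 : ℤ))) ^ 3 = 1 := by
  have hcubic := cube_add_cube_eq_of_pqr_identity (zpow_neg_three_mul_pow_three hX)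
    (hPQR (X ^ (-3 : ℤ))) h
  rw [div_pow, div_pow, ← add_div, div_eq_one_iff_eq (pow_ne_zero 3 hP), hcubic]
end

section
/- If polynomials P, Q, R in C[z] satisfy z(z-1)·P(z)^3 = Q(z)^3 + R(z)^3, and (X,Y) lies on X^3 + Y^3 = 1 with XY ≠ 0 and P(X^{-3}) ≠ 0, then U = X^2·Q(X^{-3})/(Y·P(X^{-3})) and V = X^2·R(X^{-3})/(Y·P(X^{-3})) satisfy U^3 + V^3 = 1. -/
/-! On the Fermat cubic `X^3 + Y^3 = 1`, the substitution `z = X⁻³` turns `z (z - 1)` into the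
cube `(Y / X^2)^3`. The identity `z (z - 1) P^3 = Q^3 + R^3` at that point therefore reads
`c^3 = Q^3 + R^3` with `c = Y P / X^2`, and dividing by `c^3` gives the point `(Q / c, R / c)`. -/

theorem inv_cube_mul_inv_cube_sub_one {K : Type*} [Field K] {X Y : K} (hX : X ≠ 0)
    (h : X ^ 3 + Y ^ 3 = 1) : (X ^ 3)⁻¹ * ((X ^ 3)⁻¹ - 1) = (Y / X ^ 2) ^ 3 := by
  field_simp
  linear_combination -h

theorem div_pow_three_add_div_pow_three_eq_one {K : Type*} [Field K] {c q r : K} (hc : c ≠ 0)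
    (h : c ^ 3 = q ^ 3 + r ^ 3) : (q / c) ^ 3 + (r / c) ^ 3 = 1 := by
  rw [div_pow, div_pow, ← add_div, ← h, div_self (pow_ne_zero 3 hc)]

theorem pqr_even_gives_E3_endomorphism (P Q R : Polynomial ℂ)
    (hPQR : ∀ z : ℂ, z * (z - 1) * (P.eval z) ^ 3 = (Q.eval z) ^ 3 + (R.eval z) ^ 3)
    (X Y : ℂ) (hXY : X * Y ≠ 0) (hP : P.eval (X ^ (-3 : ℤ)) ≠ 0)
    (h : X ^ 3 + Y ^ 3 = 1) :
    (X ^ 2 * Q.eval (X ^ (-3 : ℤ)) / (Y * P.eval (X ^ (-3 : ℤ)))) ^ 3 +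
      (X ^ 2 * R.eval (X ^ (-3 : ℤ)) / (Y * P.eval (X ^ (-3 : ℤ)))) ^ 3 = 1 := by
  obtain ⟨hX, hY⟩ := mul_ne_zero_iff.mp hXY
  have hz : X ^ (-3 : ℤ) = (X ^ 3)⁻¹ := by rw [zpow_neg, zpow_ofNat]
  rw [hz] at hP ⊢
  set c := Y / X ^ 2 * P.eval (X ^ 3)⁻¹
  have hc : c ≠ 0 := mul_ne_zero (div_ne_zero hY (pow_ne_zero 2 hX)) hP
  have hcube : c ^ 3 = Q.eval (X ^ 3)⁻¹ ^ 3 + R.eval (X ^ 3)⁻¹ ^ 3 := by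
    rw [mul_pow, ← inv_cube_mul_inv_cube_sub_one hX h]
    exact hPQR _
  have hrescale : ∀ s : ℂ, X ^ 2 * s / (Y * P.eval (X ^ 3)⁻¹) = s / c := fun s => by
    simp only [c]
    field_simp
  simpa only [hrescale] using div_pow_three_add_div_pow_three_eq_one hc hcube
end

section
/- If P1, Q1, R1 are polynomials satisfying (1-z)R1^2 = Q1^4 - z·P1^4, then the triple (P,Q,R) = (2·P1·Q1·R1, Q1^4 + z·P1^4, Q1^8 - 6z·P1^4·Q1^4 + z^2·P1^8) satisfies R(z)^2 = Q(z)^4 - z(1-z)^2·P(z)^4, i.e. (Q1^8 - 6zP1^4Q1^4 + z^2P1^8)^2 = (Q1^4 + zP1^4)^4 - z(1-z)^2(2P1Q1R1)^4. -/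
theorem duplication_formula_E1 (P1 Q1 R1 : Polynomial ℂ)
    (h : ∀ z : ℂ, (1 - z) * (R1.eval z) ^ 2 = (Q1.eval z) ^ 4 - z * (P1.eval z) ^ 4) :
    ∀ z : ℂ,
      ((Q1.eval z) ^ 8 - 6 * z * (P1.eval z) ^ 4 * (Q1.eval z) ^ 4 +
          z ^ 2 * (P1.eval z) ^ 8) ^ 2 =
        ((Q1.eval z) ^ 4 + z * (P1.eval z) ^ 4) ^ 4 -
          z * (1 - z) ^ 2 * (2 * P1.eval z * Q1.eval z * R1.eval z) ^ 4 := by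
  intro z
  linear_combination (16 * z * (P1.eval z) ^ 4 * (Q1.eval z) ^ 4 *
    ((1 - z) * (R1.eval z) ^ 2 + (Q1.eval z) ^ 4 - z * (P1.eval z) ^ 4)) * h z
end

section
/- If P, Q, R are polynomials satisfying (1-z)R^2 = Q^3 - z·P^6, then the triple (2PR, Q(Q^3 + 8zP^6), Q^6 - 20zP^6Q^3 - 8z^2P^12) satisfies the even-degree identity: (Q^6 - 20zP^6Q^3 - 8z^2P^{12})^2 = (Q(Q^3+8zP^6))^3 - z(1-z)^3·(2PR)^6. -/
/-! With `w = q³ - z p⁶`, the duplication formula is a polynomial identity in `z, p, q` in which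
`w` enters only through `64 z p⁶ w³`; the hypothesis `(1 - z) r² = w` turns that term into
`z (1 - z)³ (2 p r)⁶`. -/

section

variable {A : Type*} [CommRing A]

theorem duplication_identity (z p q : A) :
    (q ^ 6 - 20 * z * p ^ 6 * q ^ 3 - 8 * z ^ 2 * p ^ 12) ^ 2 =
      (q * (q ^ 3 + 8 * z * p ^ 6)) ^ 3 - 64 * z * p ^ 6 * (q ^ 3 - z * p ^ 6) ^ 3 := by
  ring

theorem duplication_of_eq {z p q r : A} (h : (1 - z) * r ^ 2 = q ^ 3 - z * p ^ 6) :
    (q ^ 6 - 20 * z * p ^ 6 * q ^ 3 - 8 * z ^ 2 * p ^ 12) ^ 2 =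
      (q * (q ^ 3 + 8 * z * p ^ 6)) ^ 3 - z * (1 - z) ^ 3 * (2 * p * r) ^ 6 := by
  rw [duplication_identity, ← h]
  ring

end

theorem duplication_formula_E2 (P Q R : Polynomial ℂ)
    (h : ∀ z : ℂ, (1 - z) * (R.eval z) ^ 2 = (Q.eval z) ^ 3 - z * (P.eval z) ^ 6) :
    ∀ z : ℂ,
      ((Q.eval z) ^ 6 - 20 * z * (P.eval z) ^ 6 * (Q.eval z) ^ 3 -
          8 * z ^ 2 * (P.eval z) ^ 12) ^ 2 =
        (Q.eval z * ((Q.eval z) ^ 3 + 8 * z * (P.eval z) ^ 6)) ^ 3 -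
          z * (1 - z) ^ 3 * (2 * P.eval z * R.eval z) ^ 6 :=
  fun z => duplication_of_eq (h z)
end
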